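/- Let G be a connected simple graph with n vertices and m edges, let 0 = λ_1 < λ_2 ≤ ... ≤ λ_n be the eigenvalues of its Laplacian matrix, and let r_L(G) = λ_n/λ_2. Then BH(G) ≤ (n(n-1)²/(4(2m + M_1(G)))) · (4 + (r_L(G) − 1/r_L(G))²). -/

import Mathlib

open Finset Polynomial

/-- The eigenvalues of the Laplacian matrix of `G` over `ℝ`, as produced (in no
particular order) by the spectral theorem for symmetric matrices. -/
noncomputable def lapEigsUnordered {V : Type*} [Fintype V] [DecidableEq V]
    (G : SimpleGraph V) [DecidableRel G.Adj] : V → ℝ :=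
  (SimpleGraph.posSemidef_lapMatrix (R := ℝ) (G := G)).1.eigenvalues

/-- `μ : Fin n → ℝ` lists the eigenvalues of the Laplacian matrix of `G`
in nondecreasing order (so, `0`-based, `μ ⟨0,_⟩ = λ₁ ≤ μ ⟨1,_⟩ = λ₂ ≤ ⋯`). -/
def IsLapEigSeq {V : Type*} [Fintype V] [DecidableEq V] (G : SimpleGraph V)
    [DecidableRel G.Adj] {n : ℕ} (μ : Fin n → ℝ) : Prop :=
  Monotone μ ∧ ∃ e : V ≃ Fin n, ∀ v, lapEigsUnordered G v = μ (e v)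

/-!
Every eigenvalue `x` counted in `BH(G)` lies in `[λ₂, λₙ]`, so `(x² - λ₂²)(λₙ² - x²) ≥ 0`, i.e.
`1/x² ≤ (λ₂² + λₙ² - x²)/(λ₂² λₙ²)`. Summing over these `k = n - 1` eigenvalues, whose squares add
up to `S = tr(L²) = 2m + M₁(G)`, and using `4S(kc - S) ≤ (kc)²` for `c = λ₂² + λₙ²` gives
`Σ 1/x² ≤ k² c² / (4 S λ₂² λₙ²)`, and `c²/(λ₂² λₙ²) = 4 + (r_L - 1/r_L)²`.
-/

theorem Matrix.IsHermitian.trace_mul_self {𝕜 ι : Type*} [RCLike 𝕜] [Fintype ι] [DecidableEq ι]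
    {A : Matrix ι ι 𝕜} (hA : A.IsHermitian) :
    (A * A).trace = ∑ i, (hA.eigenvalues i : 𝕜) ^ 2 := by
  conv_lhs => rw [hA.spectral_theorem, ← map_mul, Unitary.conjStarAlgAut_apply, trace_mul_cycle,
    Unitary.coe_star_mul_self, one_mul, diagonal_mul_diagonal, trace_diagonal]
  simp [sq]

namespace SimpleGraph

open Matrix

variable {V R : Type*} [Fintype V] [DecidableEq V] (G : SimpleGraph V) [DecidableRel G.Adj]

theorem lapMatrix_mul_self_apply_self [CommRing R] (v : V) :
    (G.lapMatrix R * G.lapMatrix R) v v = G.degree v ^ 2 + G.degree v := by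
  have hcol : ∀ u ∈ G.neighborFinset v, G.lapMatrix R u v = -1 := fun u hu => by
    have hadj : G.Adj u v := ((G.mem_neighborFinset v u).1 hu).symm
    simp [lapMatrix, degMatrix, hadj, hadj.ne]
  change (G.lapMatrix R *ᵥ fun u => G.lapMatrix R u v) v = _
  rw [lapMatrix_mulVec_apply, sum_congr rfl hcol]
  simp [lapMatrix, degMatrix, sq]

theorem trace_lapMatrix_mul_self [CommRing R] :
    (G.lapMatrix R * G.lapMatrix R).trace = 2 * #G.edgeFinset + ∑ v, (G.degree v : R) ^ 2 := by
  simp only [Matrix.trace, Matrix.diag, lapMatrix_mul_self_apply_self, sum_add_distrib]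
  rw [← Nat.cast_sum, sum_degrees_eq_twice_card_edges]
  push_cast
  ring

end SimpleGraph

theorem IsLapEigSeq.sum_sq {V : Type*} [Fintype V] [DecidableEq V] {G : SimpleGraph V}
    [DecidableRel G.Adj] {n : ℕ} {μ : Fin n → ℝ} (hμ : IsLapEigSeq G μ) :
    ∑ i, μ i ^ 2 = 2 * #G.edgeFinset + ∑ v, (G.degree v : ℝ) ^ 2 := by
  obtain ⟨-, e, he⟩ := hμ
  rw [← G.trace_lapMatrix_mul_self, (G.isHermitian_lapMatrix ℝ).trace_mul_self,
    ← e.sum_comp]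
  exact sum_congr rfl fun v _ => by rw [← he v]; rfl

theorem one_div_sq_le_of_mem_Icc {a b x : ℝ} (ha : 0 < a) (hx : x ∈ Set.Icc a b) :
    1 / x ^ 2 ≤ (a ^ 2 + b ^ 2 - x ^ 2) / (a ^ 2 * b ^ 2) := by
  obtain ⟨hax, hxb⟩ := hx
  have hx : 0 < x := ha.trans_le hax
  have hb : 0 < b := hx.trans_le hxb
  rw [div_le_div_iff₀ (by positivity) (by positivity)]
  nlinarith [mul_nonneg (sub_nonneg.2 (pow_le_pow_left₀ ha.le hax 2))
    (sub_nonneg.2 (pow_le_pow_left₀ hx.le hxb 2))]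

theorem sum_one_div_sq_le_of_forall_mem_Icc {ι : Type*} (s : Finset ι) {f : ι → ℝ} {a b : ℝ}
    (ha : 0 < a) (hf : ∀ i ∈ s, f i ∈ Set.Icc a b) :
    ∑ i ∈ s, 1 / f i ^ 2 ≤ (#s : ℝ) ^ 2 / (4 * ∑ i ∈ s, f i ^ 2) * (4 + (b / a - a / b) ^ 2) := by
  rcases s.eq_empty_or_nonempty with rfl | ⟨j, hj⟩
  · simp
  have hb : 0 < b := ha.trans_le ((hf j hj).1.trans (hf j hj).2)
  set S := ∑ i ∈ s, f i ^ 2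
  have hS : 0 < S := (sq_pos_of_pos (ha.trans_le (hf j hj).1)).trans_le
    (single_le_sum (f := fun i => f i ^ 2) (fun i _ => sq_nonneg _) hj)
  set c := a ^ 2 + b ^ 2
  have hc : 4 + (b / a - a / b) ^ 2 = c ^ 2 / (a ^ 2 * b ^ 2) := by field_simp; ring
  calc ∑ i ∈ s, 1 / f i ^ 2 ≤ ∑ i ∈ s, (c - f i ^ 2) / (a ^ 2 * b ^ 2) :=
        sum_le_sum fun i hi => one_div_sq_le_of_mem_Icc ha (hf i hi)
    _ = (#s * c - S) / (a ^ 2 * b ^ 2) := by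
        rw [← sum_div, sum_sub_distrib, sum_const, nsmul_eq_mul]
    _ ≤ (#s : ℝ) ^ 2 / (4 * S) * (4 + (b / a - a / b) ^ 2) := by
        rw [hc, div_mul_div_comm, div_le_div_iff₀ (by positivity) (by positivity)]
        nlinarith [mul_nonneg (by positivity : (0 : ℝ) ≤ a ^ 2 * b ^ 2) (sq_nonneg (#s * c - 2 * S))]

theorem statement_1 {n : ℕ} (hn : 2 ≤ n) (G : SimpleGraph (Fin n)) [DecidableRel G.Adj]
    (μ : Fin n → ℝ) (hμ : IsLapEigSeq G μ)
    (hμ1 : μ ⟨0, by omega⟩ = 0) (hμ2 : 0 < μ ⟨1, by omega⟩) :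
    (n : ℝ) * ∑ i ∈ univ.filter (fun i : Fin n => 0 < i.val), 1 / μ i ^ 2 ≤
      ((n : ℝ) * ((n : ℝ) - 1) ^ 2 / (4 * (2 * (G.edgeFinset.card : ℝ) + ∑ v, ((G.degree v : ℝ)) ^ 2))) *
        (4 + (μ ⟨n - 1, by omega⟩ / μ ⟨1, by omega⟩ - μ ⟨1, by omega⟩ / μ ⟨n - 1, by omega⟩) ^ 2) := by
  set s := univ.filter (fun i : Fin n => 0 < i.val)
  have hs_card : (#s : ℝ) = n - 1 := by
    have : s = univ.erase ⟨0, by omega⟩ := by ext i; simp [s, Fin.ext_iff, Nat.pos_iff_ne_zero]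
    rw [this, card_erase_of_mem (mem_univ _), card_univ, Fintype.card_fin,
      Nat.cast_sub (by omega), Nat.cast_one]
  have hs_sum : ∑ i ∈ s, μ i ^ 2 = 2 * #G.edgeFinset + ∑ v, (G.degree v : ℝ) ^ 2 := by
    rw [sum_filter_of_ne fun i _ hi => ?_, hμ.sum_sq]
    refine Nat.pos_of_ne_zero fun h0 => hi ?_
    rw [show i = ⟨0, by omega⟩ from Fin.ext h0, hμ1, sq, zero_mul]
  have hs_mem : ∀ i ∈ s, μ i ∈ Set.Icc (μ ⟨1, by omega⟩) (μ ⟨n - 1, by omega⟩) := fun i hi =>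
    ⟨hμ.1 (Fin.mk_le_of_le_val (mem_filter.1 hi).2), hμ.1 (Fin.le_iff_val_le_val.2 (by simp; omega))⟩
  calc _ ≤ (n : ℝ) * ((#s : ℝ) ^ 2 / (4 * ∑ i ∈ s, μ i ^ 2) *
        (4 + (μ ⟨n - 1, by omega⟩ / μ ⟨1, by omega⟩ - μ ⟨1, by omega⟩ / μ ⟨n - 1, by omega⟩) ^ 2)) := by
        gcongr
        exact sum_one_div_sq_le_of_forall_mem_Icc s hμ2 hs_mem
    _ = _ := by rw [hs_card, hs_sum]; ring
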